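/- Let X be standard logistic, F(x) = 1/(1 + e^{−x}). Then for all p ∈ (0, 0.5), p_{L,p}(X) = p_{R,p}(X) = (1 + ((1−p)/p)^{(2−p)/p})^{−1}, and this common value is at most (1 + 3⁵)⁻¹ = 1/244 for all p ∈ (0, 0.25]. -/

import Mathlib

/-!
With `s = log ((1 - p) / p)` the quantiles are `F⁻¹(p) = -s` and `F⁻¹(1 - p) = s`, so the two
outer points are `∓ ((2 - p) / p) s`. The logistic law is continuous (no atoms, so `<` and `≤`
give the same probability) and symmetric, hence both tails equal
`1 / (1 + exp (((2 - p) / p) s)) = (1 + ((1 - p) / p) ^ ((2 - p) / p))⁻¹`.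
-/

open Set MeasureTheory ProbabilityTheory Real

section CDF

variable {μ : Measure ℝ} [IsProbabilityMeasure μ] {a : ℝ}

lemma measure_singleton_eq_zero_of_continuousAt_cdf (h : ContinuousAt (cdf μ) a) :
    μ {a} = 0 := by
  rw [← measure_cdf μ, StieltjesFunction.measure_singleton,
    leftLim_eq_of_tendsto (h.tendsto.mono_left nhdsWithin_le_nhds), sub_self,
    ENNReal.ofReal_zero]

lemma measureReal_Iio_eq_cdf_of_continuousAt (h : ContinuousAt (cdf μ) a) :
    μ.real (Iio a) = cdf μ a := by
  rw [cdf_eq_real,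
    measureReal_congr (Iio_ae_eq_Iic' (measure_singleton_eq_zero_of_continuousAt_cdf h))]

lemma measureReal_Ioi_eq_one_sub_cdf : μ.real (Ioi a) = 1 - cdf μ a := by
  rw [← compl_Iic, probReal_compl_eq_one_sub measurableSet_Iic, cdf_eq_real]

end CDF

lemma continuous_logistic : Continuous fun x : ℝ => 1 / (1 + exp (-x)) :=
  continuous_const.div (by fun_prop) fun x => by positivity

lemma one_sub_logistic (x : ℝ) : 1 - 1 / (1 + exp (-x)) = 1 / (1 + exp x) := by
  rw [exp_neg]
  field_simp
  ring

lemma log_div_one_sub_eq_neg (p : ℝ) : log (p / (1 - p)) = -log ((1 - p) / p) := by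
  rw [← log_inv, inv_div]

lemma logistic_left_point {p : ℝ} (hp : p ≠ 0) :
    1 / p * log (p / (1 - p)) - (1 - p) / p * log ((1 - p) / (1 - (1 - p))) =
      -((2 - p) / p * log ((1 - p) / p)) := by
  rw [sub_sub_cancel, log_div_one_sub_eq_neg]
  field_simp
  ring

lemma logistic_right_point {p : ℝ} (hp : p ≠ 0) :
    1 / p * log ((1 - p) / (1 - (1 - p))) - (1 - p) / p * log (p / (1 - p)) =
      (2 - p) / p * log ((1 - p) / p) := by
  rw [sub_sub_cancel, log_div_one_sub_eq_neg]
  field_simp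
  ring

lemma inv_one_add_rpow_le {p : ℝ} (hp0 : 0 < p) (hp : p ≤ 1 / 4) :
    (1 + ((1 - p) / p) ^ ((2 - p) / p))⁻¹ ≤ (1 + 3 ^ 5 : ℝ)⁻¹ := by
  have h3 : (3 : ℝ) ≤ (1 - p) / p := by rw [le_div_iff₀ hp0]; linarith
  have h5 : (5 : ℝ) ≤ (2 - p) / p := by rw [le_div_iff₀ hp0]; linarith
  have h243 : (3 : ℝ) ^ 5 ≤ ((1 - p) / p) ^ ((2 - p) / p) :=
    calc (3 : ℝ) ^ 5 = (3 : ℝ) ^ (5 : ℝ) := by norm_num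
      _ ≤ (3 : ℝ) ^ ((2 - p) / p) := rpow_le_rpow_of_exponent_le (by norm_num) h5
      _ ≤ ((1 - p) / p) ^ ((2 - p) / p) := rpow_le_rpow (by norm_num) h3 (by linarith)
  exact inv_anti₀ (by positivity) (by linarith)

/-- For a standard logistic random variable (c.d.f. `F(x) = 1/(1+e^{−x})`, quantile
`F⁻¹(q) = log(q/(1−q))`), for all `p ∈ (0, 1/2)`,
`p_{L,p}(X) = p_{R,p}(X) = (1 + ((1−p)/p)^{(2−p)/p})⁻¹`, and this common value is
at most `(1 + 3^5)⁻¹` for `p ∈ (0, 1/4]`. -/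
theorem logistic_outside_probs
    (μ : Measure ℝ) [IsProbabilityMeasure μ]
    (hF : ∀ x : ℝ, (μ (Iic x)).toReal = 1 / (1 + Real.exp (-x)))
    (p : ℝ) (hp : p ∈ Ioo (0:ℝ) (1/2)) :
    let Finv : ℝ → ℝ := fun q => Real.log (q / (1 - q))
    let v : ℝ := (1 + ((1 - p)/p) ^ ((2 - p)/p))⁻¹
    (μ (Iio ((1/p) * Finv p - ((1 - p)/p) * Finv (1 - p)))).toReal = v ∧
    (μ (Ioi ((1/p) * Finv (1 - p) - ((1 - p)/p) * Finv p))).toReal = v ∧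
    (p ≤ 1/4 → v ≤ (1 + 3^5 : ℝ)⁻¹) := by
  dsimp only
  obtain ⟨hp0, hp1⟩ := hp
  have hcdf (x : ℝ) : cdf μ x = 1 / (1 + exp (-x)) := (cdf_eq_real μ x).trans (hF x)
  have hcont : Continuous (cdf μ) := continuous_logistic.congr fun x => (hcdf x).symm
  have hv : (1 + ((1 - p) / p) ^ ((2 - p) / p))⁻¹ =
      1 / (1 + exp ((2 - p) / p * log ((1 - p) / p))) := by
    rw [one_div, rpow_def_of_pos (div_pos (by linarith) hp0), mul_comm]
  refine ⟨?_, ?_, inv_one_add_rpow_le hp0⟩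
  · rw [← measureReal_def, measureReal_Iio_eq_cdf_of_continuousAt hcont.continuousAt, hcdf,
      logistic_left_point hp0.ne', neg_neg, hv]
  · rw [← measureReal_def, measureReal_Ioi_eq_one_sub_cdf, hcdf, one_sub_logistic,
      logistic_right_point hp0.ne', hv]
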